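/- arXiv:2412.18696 — 2 statements merged into one kernel-verified Lean document; each statement's English description precedes it below -/
import Mathlib

section
/- Let 2 ≤ k ≤ m be natural numbers, let 0 < α ≤ β be real numbers, and let M ⊂ ℝ³ be a finite set with |M| = m such that every subset D ⊆ M with |D| = k is α∼β-connected. Then M is (m − k + 1)∼β-dense; that is, for every z ∈ M there exists a subset M' ⊆ M \ {z} with |M'| = m − k + 1 such that every z' ∈ M' satisfies ‖z − z'‖ ≤ β. -/
/-- A finite set `D` is `α∼β`-connected if `α` is the minimum and `β` the maximum of its
set of pairwise distances. -/
def IsConnectedAB (α β : ℝ) (D : Finset (EuclideanSpace ℝ (Fin 3))) : Prop :=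
  (∀ x ∈ D, ∀ y ∈ D, x ≠ y → α ≤ ‖x - y‖ ∧ ‖x - y‖ ≤ β) ∧
  (∃ x ∈ D, ∃ y ∈ D, x ≠ y ∧ ‖x - y‖ = α) ∧
  (∃ x ∈ D, ∃ y ∈ D, x ≠ y ∧ ‖x - y‖ = β)

open scoped Classical

/-- A set `M` is `m∼ε`-dense if for every `z ∈ M` there are `m` points of `M \ {z}`
within distance `ε` of `z`. -/
def IsDense' (m : ℕ) (ε : ℝ) (M : Finset (EuclideanSpace ℝ (Fin 3))) : Prop :=
  ∀ z ∈ M, ∃ M' ⊆ M.erase z, M'.card = m ∧ ∀ z' ∈ M', ‖z - z'‖ ≤ ε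

/-!
Any two distinct points of `M` lie in a common `k`-subset, since `2 ≤ k ≤ |M|`; that subset is
`α∼β`-connected, so the two points are at distance at most `β`. Hence every point of `M` is within
`β` of all `m - 1 ≥ m - k + 1` other points, and any `m - k + 1` of them will do.
-/

lemma Finset.exists_pair_subset_subset_card_eq {ι : Type*} [DecidableEq ι] {s : Finset ι}
    {k : ℕ} {x y : ι} (hx : x ∈ s) (hy : y ∈ s) (hk : 2 ≤ k) (hks : k ≤ s.card) :
    ∃ D, {x, y} ⊆ D ∧ D ⊆ s ∧ D.card = k :=
  Finset.exists_subsuperset_card_eq (Finset.insert_subset hx (Finset.singleton_subset_iff.2 hy))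
    (Finset.card_le_two.trans hk) hks

lemma norm_sub_le_of_forall_isConnectedAB {k : ℕ} {α β : ℝ}
    {M : Finset (EuclideanSpace ℝ (Fin 3))} (hk : 2 ≤ k) (hkM : k ≤ M.card)
    (hconn : ∀ D ⊆ M, D.card = k → IsConnectedAB α β D)
    {x y : EuclideanSpace ℝ (Fin 3)} (hx : x ∈ M) (hy : y ∈ M) (hxy : x ≠ y) :
    ‖x - y‖ ≤ β := by
  obtain ⟨D, hxyD, hDM, hDcard⟩ := Finset.exists_pair_subset_subset_card_eq hx hy hk hkM
  exact ((hconn D hDM hDcard).1 x (hxyD (by simp)) y (hxyD (by simp)) hxy).2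

lemma isDense'_of_forall_norm_sub_le {n : ℕ} {ε : ℝ} {M : Finset (EuclideanSpace ℝ (Fin 3))}
    (hn : n < M.card) (h : ∀ x ∈ M, ∀ y ∈ M, x ≠ y → ‖x - y‖ ≤ ε) : IsDense' n ε M := by
  intro z hz
  obtain ⟨M', hM'z, hM'card⟩ := Finset.exists_subset_card_eq (s := M.erase z) (n := n)
    (by rw [Finset.card_erase_of_mem hz]; omega)
  refine ⟨M', hM'z, hM'card, fun z' hz' => ?_⟩
  obtain ⟨hz'z, hz'M⟩ := Finset.mem_erase.1 (hM'z hz')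
  exact h z hz z' hz'M hz'z.symm

theorem stmt1_general (k m : ℕ) (hk : 2 ≤ k) (hkm : k ≤ m)
    (α β : ℝ)
    (M : Finset (EuclideanSpace ℝ (Fin 3))) (hM : M.card = m)
    (hconn : ∀ D ⊆ M, D.card = k → IsConnectedAB α β D) :
    IsDense' (m - k + 1) β M := by
  subst hM
  exact isDense'_of_forall_norm_sub_le (by omega) fun x hx y hy hxy =>
    norm_sub_le_of_forall_isConnectedAB hk hkm hconn hx hy hxy

theorem stmt1 (k m : ℕ) (hk : 2 ≤ k) (hkm : k ≤ m)
    (α β : ℝ) (hα : 0 < α) (hαβ : α ≤ β)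
    (M : Finset (EuclideanSpace ℝ (Fin 3))) (hM : M.card = m)
    (hconn : ∀ D ⊆ M, D.card = k → IsConnectedAB α β D) :
    IsDense' (m - k + 1) β M :=
  stmt1_general k m hk hkm α β M hM hconn
end

section
/- Let 2 ≤ k ≤ m be natural numbers, let 0 < α ≤ β be real numbers, and let M ⊂ ℝ³ be a finite set with |M| = m such that every subset D ⊆ M with |D| = k is α∼β-connected. Let ε > 0 and suppose m − k + 1 exceeds the ε-metric entropy N_ε(B(0, α, β)) of the closed annulus B(0, α, β) centered at the origin. Then M is not ε-separated; that is, there exist two distinct points x, y ∈ M with ‖x − y‖ < ε. -/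
/-- The closed annulus `B(z, κ, s) = {z' : κ ≤ ‖z - z'‖ ≤ s}`. -/
def annulus (z : EuclideanSpace ℝ (Fin 3)) (κ s : ℝ) : Set (EuclideanSpace ℝ (Fin 3)) :=
  {z' | κ ≤ ‖z - z'‖ ∧ ‖z - z'‖ ≤ s}

/-- A set is `ε`-separated if all pairwise distances are at least `ε`. -/
def IsEpsSeparated (ε : ℝ) (D : Set (EuclideanSpace ℝ (Fin 3))) : Prop :=
  ∀ x ∈ D, ∀ y ∈ D, x ≠ y → ε ≤ ‖x - y‖

/-- The `ε`-metric entropy of `X`: the maximum cardinality of an `ε`-separated finite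
subset of `X`. -/
noncomputable def metricEntropy (ε : ℝ) (X : Set (EuclideanSpace ℝ (Fin 3))) : ℕ :=
  sSup {n | ∃ D : Finset (EuclideanSpace ℝ (Fin 3)),
    ↑D ⊆ X ∧ IsEpsSeparated ε ↑D ∧ D.card = n}

open Bornology

local notation "E³" => EuclideanSpace ℝ (Fin 3)

lemma mem_annulus_zero {w : E³} {κ s : ℝ} : w ∈ annulus 0 κ s ↔ κ ≤ ‖w‖ ∧ ‖w‖ ≤ s := by
  simp [annulus]

lemma isBounded_annulus (z : E³) (κ s : ℝ) : IsBounded (annulus z κ s) :=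
  Metric.isBounded_closedBall.subset fun w hw => by
    rw [Metric.mem_closedBall, dist_eq_norm, norm_sub_rev]
    exact hw.2

lemma IsEpsSeparated.image_const_sub {ε : ℝ} {S : Set E³} (hS : IsEpsSeparated ε S) (z : E³) :
    IsEpsSeparated ε ((z - ·) '' S) := by
  rintro _ ⟨x, hx, rfl⟩ _ ⟨y, hy, rfl⟩ hxy
  rw [sub_sub_sub_cancel_left, norm_sub_rev]
  exact hS x hx y hy (ne_of_apply_ne _ hxy)

/-- Pigeonhole over a finite `ε/2`-net of `X`: two points sharing a net point are `< ε` apart.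
Without this bound the `sSup` in `metricEntropy` would be the junk value `0`. -/
lemma bddAbove_card_isEpsSeparated {ε : ℝ} (hε : 0 < ε) {X : Set E³} (hX : IsBounded X) :
    BddAbove {n | ∃ D : Finset E³, ↑D ⊆ X ∧ IsEpsSeparated ε ↑D ∧ D.card = n} := by
  obtain ⟨t, ht, hcover⟩ := Metric.totallyBounded_iff.mp
    (hX.isCompact_closure.totallyBounded.subset subset_closure) (ε / 2) (half_pos hε)
  refine ⟨ht.toFinset.card, ?_⟩
  rintro _ ⟨D, hDX, hD, rfl⟩
  by_contra! hcard
  have hnear : ∀ x : E³, ∃ c, x ∈ X → c ∈ ht.toFinset ∧ dist x c < ε / 2 := fun x => by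
    by_cases hx : x ∈ X
    · obtain ⟨c, hc, hxc⟩ := Set.mem_iUnion₂.mp (hcover hx)
      exact ⟨c, fun _ => ⟨ht.mem_toFinset.mpr hc, hxc⟩⟩
    · exact ⟨0, fun h => absurd h hx⟩
  choose center hcenter using hnear
  obtain ⟨x, hx, y, hy, hxy, hsame⟩ := Finset.exists_ne_map_eq_of_card_lt_of_maps_to hcard
    (f := center) fun x hx => (hcenter x (hDX hx)).1
  have hclose : dist x y < ε :=
    calc dist x y ≤ dist x (center x) + dist y (center y) := by
          rw [hsame, dist_comm y]; exact dist_triangle _ _ _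
      _ < ε / 2 + ε / 2 := add_lt_add (hcenter x (hDX hx)).2 (hcenter y (hDX hy)).2
      _ = ε := add_halves ε
  exact (hD x hx y hy hxy).not_gt (by rwa [← dist_eq_norm])

lemma card_le_metricEntropy {ε : ℝ} (hε : 0 < ε) {X : Set E³} (hX : IsBounded X) {D : Finset E³}
    (hDX : ↑D ⊆ X) (hD : IsEpsSeparated ε ↑D) : D.card ≤ metricEntropy ε X :=
  le_csSup (bddAbove_card_isEpsSeparated hε hX) ⟨D, hDX, hD, rfl⟩

lemma le_norm_sub_le_of_forall_isConnectedAB {α β : ℝ} {k : ℕ} {M : Finset E³} (hk : 2 ≤ k)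
    (hkM : k ≤ M.card) (hconn : ∀ D ⊆ M, D.card = k → IsConnectedAB α β D)
    {x y : E³} (hx : x ∈ M) (hy : y ∈ M) (hxy : x ≠ y) : α ≤ ‖x - y‖ ∧ ‖x - y‖ ≤ β := by
  classical
  have hpair : {x, y} ⊆ M := Finset.insert_subset hx (Finset.singleton_subset_iff.mpr hy)
  obtain ⟨D, hxyD, hDM, hDcard⟩ := Finset.exists_subsuperset_card_eq hpair
    ((Finset.card_pair hxy).trans_le hk) hkM
  exact (hconn D hDM hDcard).1 x (hxyD (by simp)) y (hxyD (by simp)) hxy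

lemma card_sub_one_le_metricEntropy {α β ε : ℝ} (hε : 0 < ε) {M : Finset E³}
    (hM : IsEpsSeparated ε ↑M) {z : E³} (hz : z ∈ M)
    (hdist : ∀ x ∈ M, z ≠ x → α ≤ ‖z - x‖ ∧ ‖z - x‖ ≤ β) :
    M.card - 1 ≤ metricEntropy ε (annulus 0 α β) := by
  classical
  have hinj : Set.InjOn (z - ·) ↑(M.erase z) := sub_right_injective.injOn
  rw [← Finset.card_erase_of_mem hz, ← Finset.card_image_of_injOn hinj]
  refine card_le_metricEntropy hε (isBounded_annulus 0 α β) ?_ ?_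
  · intro w hw
    obtain ⟨x, hx, rfl⟩ := Finset.mem_image.mp hw
    exact mem_annulus_zero.mpr
      (hdist x (Finset.mem_of_mem_erase hx) (Finset.ne_of_mem_erase hx).symm)
  · rw [Finset.coe_image]
    exact IsEpsSeparated.image_const_sub
      (fun x hx y hy => hM x (Finset.mem_of_mem_erase hx) y (Finset.mem_of_mem_erase hy)) z

theorem stmt2_general (k m : ℕ) (hk : 2 ≤ k) (hkm : k ≤ m)
    (α β : ℝ)
    (M : Finset (EuclideanSpace ℝ (Fin 3))) (hM : M.card = m)
    (hconn : ∀ D ⊆ M, D.card = k → IsConnectedAB α β D)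
    (ε : ℝ) (hε : 0 < ε)
    (hbig : metricEntropy ε (annulus 0 α β) < m - k + 1) :
    ∃ x ∈ M, ∃ y ∈ M, x ≠ y ∧ ‖x - y‖ < ε := by
  by_contra! hsep
  obtain ⟨z, hz⟩ := Finset.card_pos.mp (show 0 < M.card by omega)
  have hentropy := card_sub_one_le_metricEntropy hε hsep hz fun x hx hzx =>
    le_norm_sub_le_of_forall_isConnectedAB hk (hM ▸ hkm) hconn hz hx hzx
  omega

theorem stmt2 (k m : ℕ) (hk : 2 ≤ k) (hkm : k ≤ m)
    (α β : ℝ) (hα : 0 < α) (hαβ : α ≤ β)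
    (M : Finset (EuclideanSpace ℝ (Fin 3))) (hM : M.card = m)
    (hconn : ∀ D ⊆ M, D.card = k → IsConnectedAB α β D)
    (ε : ℝ) (hε : 0 < ε)
    (hbig : metricEntropy ε (annulus 0 α β) < m - k + 1) :
    ∃ x ∈ M, ∃ y ∈ M, x ≠ y ∧ ‖x - y‖ < ε :=
  stmt2_general k m hk hkm α β M hM hconn ε hε hbig
end
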